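/- arXiv:1607.03651 — 2 statements merged into one kernel-verified Lean document; each statement's English description precedes it below -/
import Mathlib

section
/- In the formal power series ring R⟦x,y,t⟧ the following identity holds: ∑_{r≥0} ∑_{n≥k≥0} B^r_{n+r,k+r} · x^n y^r t^k / (n!·r!) = exp( y·∑_{j≥0} a_{j+1} x^j/j! ) · exp( t·∑_{j≥1} b_j x^j/j! ). -/
noncomputable section

/-- `R = ℚ[a_1,a_2,…;b_1,b_2,…]`, realized as the polynomial ring over `ℚ` with variables
`X (true, i) = a_i` and `X (false, i) = b_i`. -/
abbrev RR : Type := MvPolynomial (Bool × ℕ) ℚ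

/-- the variable `a_i` -/
def va (i : ℕ) : RR := MvPolynomial.X (true, i)
/-- the variable `b_i` -/
def vb (i : ℕ) : RR := MvPolynomial.X (false, i)

/-- the derivation `∂` of `R` with `∂ a_i = a_{i+1}` and `∂ b_i = b_{i+1}` -/
def del : RR → RR :=
  fun p => MvPolynomial.mkDerivation ℚ (fun s : Bool × ℕ => MvPolynomial.X (s.1, s.2 + 1)) p

/-- coefficientwise extension of a map on coefficients to `A[t]` (i.e. `∂` with `∂ t = 0`) -/
def polyLift {A : Type*} [Semiring A] (D : A → A) (p : Polynomial A) : Polynomial A :=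
  p.sum fun i c => Polynomial.C (D c) * Polynomial.X ^ i

/-- the map `E : R[t] → R[t]`, `E(p) = t·b_1·p + ∂(p)` -/
def EOp (p : Polynomial RR) : Polynomial RR :=
  Polynomial.C (vb 1) * Polynomial.X * p + polyLift del p

/-- the partial `r`-Bell polynomial `B^r_{n+r,k+r}`: the coefficient of `t^k` in `E^n(a_1^r)` -/
def rBell (n k r : ℕ) : RR := (EOp^[n] (Polynomial.C (va 1 ^ r))).coeff k

/-- Exponential of a formal multivariate power series (intended for series with zero
constant term): `exp(u) = ∑_{j≥0} u^j/j!`; for a series `u` of positive order only the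
terms with `j ≤ |d|` contribute to the coefficient of a monomial of total degree `|d|`. -/
def sexp {σ : Type*} {A : Type*} [Ring A] [Algebra ℚ A] (u : MvPowerSeries σ A) :
    MvPowerSeries σ A :=
  fun d => MvPowerSeries.coeff d
    (∑ j ∈ Finset.range (d.sum (fun _ m => m) + 1), (j.factorial : ℚ)⁻¹ • u ^ j)

/-- The generating series `S(t,x,y) = ∑_{r≥0} ∑_{n≥k≥0} B^r_{n+r,k+r} x^n y^r t^k/(n!·r!)`
in `R⟦x,y,t⟧` (coordinates `0 ↦ x`, `1 ↦ y`, `2 ↦ t`). -/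
def Sgen : MvPowerSeries (Fin 3) RR :=
  fun d => if d 2 ≤ d 0 then
    (((d 0).factorial * (d 1).factorial : ℚ))⁻¹ • rBell (d 0) (d 2) (d 1)
  else 0

/-- the series `y·∑_{j≥0} a_{j+1} x^j/j!` in `R⟦x,y,t⟧` -/
def serA : MvPowerSeries (Fin 3) RR :=
  fun d => if d 1 = 1 ∧ d 2 = 0 then ((d 0).factorial : ℚ)⁻¹ • va (d 0 + 1) else 0

/-- the series `t·∑_{j≥1} b_j x^j/j!` in `R⟦x,y,t⟧` -/
def serB : MvPowerSeries (Fin 3) RR :=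
  fun d => if d 1 = 0 ∧ d 2 = 1 ∧ 1 ≤ d 0 then ((d 0).factorial : ℚ)⁻¹ • vb (d 0) else 0

/-!
`E` satisfies the twisted Leibniz rule `E (a • q) = ∂a • q + a • E q`, so
`Eⁿ(a₁ʳ) = ∑ C(n,i) ∂ⁱ(a₁ʳ) Eⁿ⁻ⁱ(1)`. In exponential generating functions in `x` this reads
`∑ₙ B^r_{n+r,k+r} xⁿ/n! = (e^{x∂} a₁)ʳ · G_k` with `G_k = ∑ₙ [tᵏ] Eⁿ(1) xⁿ/n!`, because `e^{x∂}`
is multiplicative and `e^{x∂} a₁ = ∑ a_{j+1} xʲ/j!`. Differentiating `Eⁿ(1)` in `t` gives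
`(k+1) G_{k+1} = B · G_k` with `B = ∑_{j≥1} b_j xʲ/j!`, hence `G_k = Bᵏ/k!`. So both sides have
coefficient `[xⁿ] Aʳ Bᵏ / (r! k!)` at `xⁿ yʳ tᵏ`, where `A = ∑ a_{j+1} xʲ/j!`.
-/

open Finset

theorem iterate_map_smul_eq_sum_antidiagonal {A M : Type*} [Semiring A] [AddCommMonoid M]
    [Module A M] (D₁ : A → A) (D₂ : M →+ M)
    (h : ∀ (a : A) (m : M), D₂ (a • m) = D₁ a • m + a • D₂ m) (n : ℕ) (a : A) (m : M) :
    D₂^[n] (a • m) = ∑ ij ∈ antidiagonal n, n.choose ij.1 • (D₁^[ij.1] a • D₂^[ij.2] m) := by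
  induction n with
  | zero => simp
  | succ n ih =>
    rw [sum_antidiagonal_choose_succ_nsmul (fun i j => D₁^[i] a • D₂^[j] m) n]
    simp only [Function.iterate_succ_apply', ih, map_sum, map_nsmul, h, nsmul_add,
      sum_add_distrib]
    rw [add_comm]
    congr 1
    refine sum_congr rfl fun ⟨i, j⟩ hij => ?_
    rw [n.choose_symm_of_eq_add (mem_antidiagonal.1 hij).symm]

section Derivation

open Polynomial

lemma del_add (p q : RR) : del (p + q) = del p + del q := by
  simp [del]

lemma del_mul (p q : RR) : del (p * q) = del p * q + p * del q := by
  simp only [del, Derivation.leibniz, smul_eq_mul]; ring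

lemma del_mul_natCast (p : RR) (n : ℕ) : del (p * n) = del p * n := by
  rw [del_mul, show del (n : RR) = 0 from Derivation.map_natCast _ n, mul_zero, add_zero]

def delHom : RR →+ RR := AddMonoidHom.mk' del del_add

lemma iterate_del_mul (n : ℕ) (p q : RR) :
    del^[n] (p * q) = ∑ ij ∈ antidiagonal n, n.choose ij.1 • (del^[ij.1] p * del^[ij.2] q) :=
  iterate_map_smul_eq_sum_antidiagonal del delHom (fun p q => del_mul p q) n p q

lemma del_X (b : Bool) (i : ℕ) : del (MvPolynomial.X (b, i)) = MvPolynomial.X (b, i + 1) := by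
  simp [del, MvPolynomial.mkDerivation_X]

lemma iterate_del_X (n : ℕ) (b : Bool) (i : ℕ) :
    del^[n] (MvPolynomial.X (b, i)) = MvPolynomial.X (b, i + n) := by
  induction n with
  | zero => rfl
  | succ n ih => rw [Function.iterate_succ_apply', ih, del_X, add_assoc]

lemma iterate_del_one (n : ℕ) : del^[n + 1] 1 = 0 := by
  rw [Function.iterate_succ_apply, show del 1 = 0 by simp [del]]
  exact Function.iterate_fixed (map_zero delHom) n

lemma coeff_polyLift_del (p : RR[X]) (k : ℕ) : (polyLift del p).coeff k = del (p.coeff k) := by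
  simp only [polyLift, Polynomial.sum, finsetSum_coeff, coeff_C_mul, coeff_X_pow, mul_ite,
    mul_one, mul_zero, sum_ite_eq, mem_support_iff]
  split_ifs with h
  · rfl
  · simp [not_not.mp h, del]

lemma polyLift_del_add (p q : RR[X]) : polyLift del (p + q) = polyLift del p + polyLift del q := by
  ext k; simp only [coeff_polyLift_del, coeff_add, del_add]

lemma polyLift_del_C_mul (a : RR) (q : RR[X]) :
    polyLift del (C a * q) = C (del a) * q + C a * polyLift del q := by
  ext k; simp only [coeff_polyLift_del, coeff_add, coeff_C_mul, del_mul]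

lemma derivative_polyLift_del (q : RR[X]) :
    derivative (polyLift del q) = polyLift del (derivative q) := by
  ext k; rw [coeff_derivative, coeff_polyLift_del, coeff_polyLift_del, coeff_derivative,
    ← Nat.cast_add_one, del_mul_natCast]

lemma coeff_zero_EOp (p : RR[X]) : (EOp p).coeff 0 = del (p.coeff 0) := by
  simp [EOp, coeff_polyLift_del]

lemma EOp_add (p q : RR[X]) : EOp (p + q) = EOp p + EOp q := by
  simp only [EOp, polyLift_del_add]; ring

def EOpHom : RR[X] →+ RR[X] := AddMonoidHom.mk' EOp EOp_add

lemma EOp_smul (a : RR) (q : RR[X]) : EOp (a • q) = del a • q + a • EOp q := by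
  simp only [EOp, smul_eq_C_mul, polyLift_del_C_mul]; ring

lemma iterate_EOp_smul (n : ℕ) (a : RR) (q : RR[X]) :
    EOp^[n] (a • q) = ∑ ij ∈ antidiagonal n, n.choose ij.1 • (del^[ij.1] a • EOp^[ij.2] q) :=
  iterate_map_smul_eq_sum_antidiagonal del EOpHom EOp_smul n a q

lemma derivative_EOp (q : RR[X]) :
    derivative (EOp q) = C (vb 1) * q + EOp (derivative q) := by
  simp only [EOp, derivative_add, derivative_mul, derivative_C, derivative_X,
    derivative_polyLift_del]
  ring

end Derivation

section Egf

variable {A : Type*} [Semiring A] [Algebra ℚ A]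

def egf (u : ℕ → A) : PowerSeries A :=
  PowerSeries.mk fun n => (n.factorial : ℚ)⁻¹ • u n

lemma coeff_egf (u : ℕ → A) (n : ℕ) :
    PowerSeries.coeff n (egf u) = (n.factorial : ℚ)⁻¹ • u n :=
  PowerSeries.coeff_mk _ _

lemma coeff_egf_mul (u v : ℕ → A) (n : ℕ) :
    PowerSeries.coeff n (egf u * egf v)
      = (n.factorial : ℚ)⁻¹ • ∑ ij ∈ antidiagonal n, n.choose ij.1 • (u ij.1 * v ij.2) := by
  rw [PowerSeries.coeff_mul, smul_sum]
  refine sum_congr rfl fun ⟨i, j⟩ hij => ?_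
  obtain rfl := mem_antidiagonal.1 hij
  rw [coeff_egf, coeff_egf, smul_mul_smul_comm, ← Nat.cast_smul_eq_nsmul ℚ, smul_smul]
  congr 1
  have h := Nat.choose_mul_factorial_mul_factorial (Nat.le_add_right i j)
  rw [Nat.add_sub_cancel_left] at h
  field_simp
  rw [← h]
  push_cast
  ring

def expDel : RR →* PowerSeries RR where
  toFun p := egf fun n => del^[n] p
  map_one' := by
    ext (_ | n)
    · simp [coeff_egf]
    · simp [coeff_egf, iterate_del_one]
  map_mul' p q := by
    show egf _ = egf _ * egf _
    ext n
    rw [coeff_egf_mul, coeff_egf, iterate_del_mul]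

lemma expDel_apply (p : RR) : expDel p = egf fun n => del^[n] p := rfl

lemma coeff_expDel (p : RR) (n : ℕ) :
    PowerSeries.coeff n (expDel p) = (n.factorial : ℚ)⁻¹ • del^[n] p := by
  rw [expDel_apply, coeff_egf]

def bellEgf (k : ℕ) : PowerSeries RR := egf fun n => rBell n k 0

end Egf

section BellPolynomials

open Polynomial

lemma rBell_eq_sum (n k r : ℕ) :
    rBell n k r
      = ∑ ij ∈ antidiagonal n, n.choose ij.1 • (del^[ij.1] (va 1 ^ r) * rBell ij.2 k 0) := by
  have hC (a : RR) : C a = a • (1 : RR[X]) := by rw [smul_eq_C_mul, mul_one]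
  simp only [rBell, hC, iterate_EOp_smul, finsetSum_coeff, coeff_smul, pow_zero, one_smul,
    smul_eq_mul]

lemma egf_rBell (k r : ℕ) : egf (fun n => rBell n k r) = expDel (va 1) ^ r * bellEgf k := by
  ext n
  rw [← map_pow, bellEgf, expDel_apply, coeff_egf_mul, coeff_egf, rBell_eq_sum]

lemma coeff_zero_iterate_EOp (n : ℕ) (p : RR[X]) : (EOp^[n] p).coeff 0 = del^[n] (p.coeff 0) := by
  induction n with
  | zero => rfl
  | succ n ih => rw [Function.iterate_succ_apply', Function.iterate_succ_apply', coeff_zero_EOp, ih]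

lemma rBell_zero_zero (n : ℕ) : rBell n 0 0 = del^[n] 1 := by
  rw [rBell, coeff_zero_iterate_EOp, pow_zero, coeff_C_zero]

lemma bellEgf_zero : bellEgf 0 = 1 := by
  rw [← map_one expDel]
  ext n
  rw [bellEgf, coeff_egf, coeff_expDel, rBell_zero_zero]

-- `∂ b₀ = b₁` makes `[d/dt, E] = b₁ = [E, b₀]`, so `d/dt + b₀` commutes with `E`.
lemma derivative_iterate_EOp_one (n : ℕ) :
    derivative (EOp^[n] 1) + vb 0 • EOp^[n] 1 = EOp^[n] (vb 0 • 1) := by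
  have hcomm : Function.Commute (fun q => derivative q + vb 0 • q) EOp := by
    intro q
    simp only [derivative_EOp, EOp_add, EOp_smul, ← smul_eq_C_mul]
    rw [show del (vb 0) = vb 1 from del_X false 0]
    abel
  simpa using (hcomm.iterate_right n) 1

lemma rBell_succ_zero (n k : ℕ) :
    ((k : ℚ) + 1) • rBell n (k + 1) 0 + vb 0 * rBell n k 0
      = ∑ ij ∈ antidiagonal n, n.choose ij.1 • (vb ij.1 * rBell ij.2 k 0) := by
  have h := congrArg (coeff · k) (derivative_iterate_EOp_one n)
  simp only [coeff_add, coeff_derivative, iterate_EOp_smul, finsetSum_coeff, coeff_smul,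
    smul_eq_mul, vb, iterate_del_X, zero_add] at h
  simpa [rBell, Algebra.smul_def, vb, mul_comm] using h

end BellPolynomials

section BellEgf

-- `∑_{j≥1} b_j x^j/j!`, written with the variable `b₀` that `∂` sends to `b₁`.
def bSeries : PowerSeries RR := expDel (vb 0) - PowerSeries.C (vb 0)

lemma expDel_vb_zero : expDel (vb 0) = egf vb := by
  simp only [expDel_apply, vb, iterate_del_X, zero_add]
  rfl

lemma bellEgf_succ (k : ℕ) : ((k : ℚ) + 1) • bellEgf (k + 1) = bSeries * bellEgf k := by
  refine PowerSeries.ext fun n => ?_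
  unfold bellEgf
  rw [bSeries, sub_mul, map_sub, PowerSeries.coeff_C_mul, PowerSeries.coeff_smul, expDel_vb_zero,
    coeff_egf_mul, coeff_egf, coeff_egf, ← rBell_succ_zero, smul_add, smul_comm,
    mul_smul_comm]
  abel

lemma bellEgf_eq (k : ℕ) : bellEgf k = (k.factorial : ℚ)⁻¹ • bSeries ^ k := by
  induction k with
  | zero => simp [bellEgf_zero]
  | succ k ih =>
    have h := bellEgf_succ k
    rw [ih, mul_smul_comm, ← pow_succ'] at h
    rw [← inv_smul_smul₀ (by positivity : (k : ℚ) + 1 ≠ 0) (bellEgf (k + 1)), h, smul_smul,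
      Nat.factorial_succ]
    push_cast
    rw [mul_inv]

end BellEgf

section ThreeVariables

def xyt (n r k : ℕ) : Fin 3 →₀ ℕ := Finsupp.single 0 n + Finsupp.single 1 r + Finsupp.single 2 k

@[simp] lemma xyt_apply_zero (n r k : ℕ) : xyt n r k 0 = n := by simp [xyt]
@[simp] lemma xyt_apply_one (n r k : ℕ) : xyt n r k 1 = r := by simp [xyt]
@[simp] lemma xyt_apply_two (n r k : ℕ) : xyt n r k 2 = k := by simp [xyt]

lemma finsupp_fin_three_ext {d e : Fin 3 →₀ ℕ} (h₀ : d 0 = e 0) (h₁ : d 1 = e 1) (h₂ : d 2 = e 2) :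
    d = e := by
  ext i; fin_cases i <;> assumption

variable {A : Type*} [Semiring A]

lemma coeff_mul_of_tDegree_of_yDegree {f g : MvPowerSeries (Fin 3) A} {k r : ℕ}
    (hf : ∀ e, MvPowerSeries.coeff e f ≠ 0 → e 2 = k)
    (hg : ∀ e, MvPowerSeries.coeff e g ≠ 0 → e 1 = r) (d : Fin 3 →₀ ℕ) :
    MvPowerSeries.coeff d (f * g) = if k ≤ d 2 ∧ r ≤ d 1 then
      ∑ ij ∈ antidiagonal (d 0), MvPowerSeries.coeff (xyt ij.1 (d 1 - r) k) f
        * MvPowerSeries.coeff (xyt ij.2 r (d 2 - k)) g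
    else 0 := by
  have hsum : ∀ p ∈ antidiagonal d, ∀ i, p.1 i + p.2 i = d i := fun p hp i => by
    rw [← HasAntidiagonal.mem_antidiagonal.1 hp, Finsupp.add_apply]
  rw [MvPowerSeries.coeff_mul]
  split_ifs with hd
  · symm
    refine sum_bij_ne_zero (fun ij _ _ => (xyt ij.1 (d 1 - r) k, xyt ij.2 r (d 2 - k)))
      (fun ij hij _ => ?_) (fun ij _ _ ij' _ _ h => ?_) (fun p hp hne => ?_) (fun _ _ _ => rfl)
    · rw [HasAntidiagonal.mem_antidiagonal] at hij ⊢
      apply finsupp_fin_three_ext <;> simp <;> omega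
    · simp only [Prod.ext_iff] at h
      have h₁ := congrArg (· 0) h.1
      have h₂ := congrArg (· 0) h.2
      simp only [xyt_apply_zero] at h₁ h₂
      exact Prod.ext h₁ h₂
    · have h₁ := hf _ (left_ne_zero_of_mul hne)
      have h₂ := hg _ (right_ne_zero_of_mul hne)
      have := hsum p hp 1
      have := hsum p hp 2
      have hp₁ : xyt (p.1 0) (d 1 - r) k = p.1 :=
        finsupp_fin_three_ext (by simp) (by simp; omega) (by simp; omega)
      have hp₂ : xyt (p.2 0) r (d 2 - k) = p.2 :=
        finsupp_fin_three_ext (by simp) (by simp; omega) (by simp; omega)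
      exact ⟨(p.1 0, p.2 0), HasAntidiagonal.mem_antidiagonal.2 (hsum p hp 0),
        by dsimp only; rwa [hp₁, hp₂], Prod.ext hp₁ hp₂⟩
  · refine sum_eq_zero fun p hp => ?_
    by_contra hne
    have h₁ := hf _ (left_ne_zero_of_mul hne)
    have h₂ := hg _ (right_ne_zero_of_mul hne)
    have := hsum p hp 1
    have := hsum p hp 2
    omega

def ytMul (r k : ℕ) (F : PowerSeries A) : MvPowerSeries (Fin 3) A :=
  fun d => if d 1 = r ∧ d 2 = k then PowerSeries.coeff (d 0) F else 0

lemma coeff_ytMul (r k : ℕ) (F : PowerSeries A) (d : Fin 3 →₀ ℕ) :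
    MvPowerSeries.coeff d (ytMul r k F)
      = if d 1 = r ∧ d 2 = k then PowerSeries.coeff (d 0) F else 0 :=
  rfl

lemma ytMul_mul (r k r' k' : ℕ) (F G : PowerSeries A) :
    ytMul r k F * ytMul r' k' G = ytMul (r + r') (k + k') (F * G) := by
  ext d
  have hF : ∀ e, MvPowerSeries.coeff e (ytMul r k F) ≠ 0 → e 2 = k := fun e he => by
    by_contra h; simp [coeff_ytMul, h] at he
  have hG : ∀ e, MvPowerSeries.coeff e (ytMul r' k' G) ≠ 0 → e 1 = r' := fun e he => by
    by_contra h; simp [coeff_ytMul, h] at he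
  rw [coeff_mul_of_tDegree_of_yDegree hF hG, coeff_ytMul, PowerSeries.coeff_mul]
  simp only [coeff_ytMul, xyt_apply_zero, xyt_apply_one, xyt_apply_two, true_and, and_true]
  by_cases h : d 1 = r + r' ∧ d 2 = k + k'
  · rw [if_pos ⟨by omega, by omega⟩, if_pos h]
    simp [show d 1 - r' = r by omega, show d 2 - k = k' by omega]
  · rw [if_neg h]
    split_ifs <;> simp_all
    omega

lemma ytMul_zero_zero_one : ytMul 0 0 (1 : PowerSeries A) = 1 := by
  ext d
  rw [coeff_ytMul, MvPowerSeries.coeff_one, PowerSeries.coeff_one, ← ite_and]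
  congr 1
  exact propext ⟨fun ⟨⟨h₁, h₂⟩, h₀⟩ => finsupp_fin_three_ext h₀ h₁ h₂, by rintro rfl; simp⟩

lemma ytMul_pow (r k : ℕ) (F : PowerSeries A) (j : ℕ) :
    ytMul r k F ^ j = ytMul (j * r) (j * k) (F ^ j) := by
  induction j with
  | zero => simp [ytMul_zero_zero_one]
  | succ j ih => rw [pow_succ, ih, ytMul_mul, pow_succ, add_mul, add_mul, one_mul, one_mul]

end ThreeVariables

section Exponentials

variable {A : Type*} [Ring A] [Algebra ℚ A]

lemma coeff_sexp (u : MvPowerSeries (Fin 3) A) (d : Fin 3 →₀ ℕ) :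
    MvPowerSeries.coeff d (sexp u) = ∑ j ∈ range (d.degree + 1),
      (j.factorial : ℚ)⁻¹ • MvPowerSeries.coeff d (u ^ j) := by
  rw [MvPowerSeries.coeff_apply, sexp, map_sum]
  rfl

lemma coeff_sexp_ytMul_one_zero (F : PowerSeries A) (d : Fin 3 →₀ ℕ) :
    MvPowerSeries.coeff d (sexp (ytMul 1 0 F))
      = if d 2 = 0 then ((d 1).factorial : ℚ)⁻¹ • PowerSeries.coeff (d 0) (F ^ d 1) else 0 := by
  rw [coeff_sexp, sum_eq_single_of_mem (d 1) (mem_range.2 (Nat.lt_succ_of_le (d.le_degree 1)))]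
  · simp [ytMul_pow, coeff_ytMul]
  · intro j _ hj
    simp [ytMul_pow, coeff_ytMul, Ne.symm hj]

lemma coeff_sexp_ytMul_zero_one (F : PowerSeries A) (d : Fin 3 →₀ ℕ) :
    MvPowerSeries.coeff d (sexp (ytMul 0 1 F))
      = if d 1 = 0 then ((d 2).factorial : ℚ)⁻¹ • PowerSeries.coeff (d 0) (F ^ d 2) else 0 := by
  rw [coeff_sexp, sum_eq_single_of_mem (d 2) (mem_range.2 (Nat.lt_succ_of_le (d.le_degree 2)))]
  · simp [ytMul_pow, coeff_ytMul]
  · intro j _ hj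
    simp [ytMul_pow, coeff_ytMul, Ne.symm hj]

lemma coeff_sexp_ytMul_mul_sexp_ytMul (F G : PowerSeries A) (d : Fin 3 →₀ ℕ) :
    MvPowerSeries.coeff d (sexp (ytMul 1 0 F) * sexp (ytMul 0 1 G))
      = ((d 1).factorial : ℚ)⁻¹ • ((d 2).factorial : ℚ)⁻¹ •
          PowerSeries.coeff (d 0) (F ^ d 1 * G ^ d 2) := by
  have hF : ∀ e, MvPowerSeries.coeff e (sexp (ytMul 1 0 F)) ≠ 0 → e 2 = 0 := fun e he => by
    by_contra h; simp [coeff_sexp_ytMul_one_zero, h] at he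
  have hG : ∀ e, MvPowerSeries.coeff e (sexp (ytMul 0 1 G)) ≠ 0 → e 1 = 0 := fun e he => by
    by_contra h; simp [coeff_sexp_ytMul_zero_one, h] at he
  rw [coeff_mul_of_tDegree_of_yDegree hF hG, if_pos ⟨Nat.zero_le _, Nat.zero_le _⟩,
    PowerSeries.coeff_mul, smul_sum, smul_sum]
  refine sum_congr rfl fun ij _ => ?_
  simp only [coeff_sexp_ytMul_one_zero, coeff_sexp_ytMul_zero_one, xyt_apply_zero, xyt_apply_one,
    xyt_apply_two, Nat.sub_zero, if_true, smul_mul_smul_comm, smul_smul]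

end Exponentials

lemma serA_eq : serA = ytMul 1 0 (expDel (va 1)) := by
  refine MvPowerSeries.ext fun d => ?_
  rw [coeff_ytMul, coeff_expDel, va, iterate_del_X, add_comm]
  rfl

lemma serB_eq : serB = ytMul 0 1 bSeries := by
  refine MvPowerSeries.ext fun d => ?_
  rw [coeff_ytMul, bSeries, map_sub, expDel_vb_zero, coeff_egf, PowerSeries.coeff_C]
  show (if d 1 = 0 ∧ d 2 = 1 ∧ 1 ≤ d 0 then _ else _) = _
  rcases Nat.eq_zero_or_pos (d 0) with h | h
  · simp [h]
  · simp [show 1 ≤ d 0 from h, h.ne']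

lemma coeff_mul_bSeries_pow_of_lt (F : PowerSeries RR) {n k : ℕ} (h : n < k) :
    PowerSeries.coeff n (F * bSeries ^ k) = 0 := by
  have hX : PowerSeries.X ∣ bSeries := by
    rw [PowerSeries.X_dvd_iff, ← PowerSeries.coeff_zero_eq_constantCoeff_apply, bSeries, map_sub,
      expDel_vb_zero, coeff_egf, PowerSeries.coeff_C]
    simp
  exact PowerSeries.X_pow_dvd_iff.1 ((pow_dvd_pow_of_dvd hX k).mul_left F) n h

lemma coeff_Sgen (d : Fin 3 →₀ ℕ) :
    MvPowerSeries.coeff d Sgen = ((d 1).factorial : ℚ)⁻¹ • ((d 2).factorial : ℚ)⁻¹ •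
      PowerSeries.coeff (d 0) (expDel (va 1) ^ d 1 * bSeries ^ d 2) := by
  have h := congrArg (PowerSeries.coeff (d 0)) (egf_rBell (d 2) (d 1))
  rw [coeff_egf, bellEgf_eq, mul_smul_comm, PowerSeries.coeff_smul] at h
  show (if d 2 ≤ d 0 then _ else 0) = _
  split_ifs with hk
  · rw [mul_inv, mul_comm, mul_smul, h]
  · rw [coeff_mul_bSeries_pow_of_lt _ (not_le.1 hk), smul_zero, smul_zero]

/-- In `R⟦x,y,t⟧`,
`∑_{r≥0} ∑_{n≥k≥0} B^r_{n+r,k+r} x^n y^r t^k/(n!·r!) =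
  exp(y·∑_{j≥0} a_{j+1} x^j/j!) · exp(t·∑_{j≥1} b_j x^j/j!)`. -/
theorem stmt4 : Sgen = sexp serA * sexp serB := by
  refine MvPowerSeries.ext fun d => ?_
  rw [coeff_Sgen, serA_eq, serB_eq, coeff_sexp_ytMul_mul_sexp_ytMul]
end
end

section
/- For all integers n, k, r ≥ 0, one has binom(n+k, n) · ∂^n(a_1^r b_1^k) = σ( B^r_{n+k+r,k+r} ), where σ : R → R is the unique ℚ-algebra homomorphism with σ(a_i) = a_i and σ(b_j) = j·b_j for all i, j ≥ 1. -/
/-!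
The variables are indexed from `0`, so `R` also contains `b_0`, with `∂ b_0 = b_1` and
`σ(b_0) = 0`. Put `e = exp(t b_0)`; then `∂ e = t b_1 e`, so `E` is `∂` conjugated by `e`,
and the coefficient of `t^k` in `e · E^m(a_1^r) = ∂^m(e · a_1^r)` reads
`∑_{i+j=k} b_0^i/i! · B_{m,j} = ∂^m(b_0^k a_1^r)/k!`.
Applying `σ` kills every term with `i > 0`.

The right-hand side is computed with the Taylor homomorphism `T p = ∑ ∂^m p · x^m/m!`. Since
`σ(b_m) = m b_m`, applying `σ` coefficientwise sends `T b_0` to `x · T b_1` and fixes `T a_1`,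
hence sends `T(b_0^k a_1^r)` to `x^k · T(b_1^k a_1^r)`; comparing coefficients of `x^(n+k)` gives
`σ(∂^(n+k)(b_0^k a_1^r))/(n+k)! = ∂^n(b_1^k a_1^r)/n!`.
-/

noncomputable section

/-- the `ℚ`-algebra endomorphism `σ` of `R` with `σ(a_i) = a_i` and `σ(b_j) = j·b_j` -/
def sigmaMap : RR →ₐ[ℚ] RR :=
  MvPolynomial.aeval (fun s : Bool × ℕ =>
    if s.1 then MvPolynomial.X s else (s.2 : RR) * MvPolynomial.X s)

open Finset
open scoped Nat

namespace Derivation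

variable {R A : Type*} [CommSemiring R] [CommRing A] [Algebra R A] (D : Derivation R A A)

theorem iterate_leibniz (n : ℕ) (a b : A) :
    D^[n] (a * b) = ∑ ij ∈ antidiagonal n, n.choose ij.1 • (D^[ij.1] a * D^[ij.2] b) := by
  induction n with
  | zero => simp
  | succ n ih =>
    rw [sum_antidiagonal_choose_succ_nsmul (fun i j => D^[i] a * D^[j] b),
      Function.iterate_succ_apply', ih, map_sum, ← sum_add_distrib]
    refine sum_congr rfl fun ij hij => ?_
    rw [Nat.choose_symm_of_eq_add (mem_antidiagonal.mp hij).symm, map_nsmul, leibniz, smul_add]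
    simp only [smul_eq_mul, Function.iterate_succ_apply']
    ring

variable [Algebra ℚ A]

def taylorSeries : A →+* PowerSeries A where
  toFun a := PowerSeries.mk fun n => (n ! : ℚ)⁻¹ • D^[n] a
  map_zero' := by ext; simp
  map_add' a b := by ext; simp [smul_add]
  map_one' := by
    ext (_ | n)
    · simp
    · simp [Function.iterate_succ_apply]
  map_mul' a b := by
    ext n
    simp only [PowerSeries.coeff_mk, PowerSeries.coeff_mul, iterate_leibniz, smul_sum]
    refine sum_congr rfl fun ij hij => ?_
    obtain rfl := mem_antidiagonal.mp hij
    rw [← Nat.cast_smul_eq_nsmul ℚ, smul_smul, smul_mul_smul_comm]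
    congr 1
    have := Nat.add_choose_mul_factorial_mul_factorial ij.1 ij.2
    rw [← Nat.choose_symm_add] at this
    field_simp
    exact_mod_cast this

@[simp]
theorem coeff_taylorSeries (a : A) (n : ℕ) :
    PowerSeries.coeff n (D.taylorSeries a) = (n ! : ℚ)⁻¹ • D^[n] a :=
  PowerSeries.coeff_mk n fun n => (n ! : ℚ)⁻¹ • D^[n] a

end Derivation

theorem inv_factorial_succ_mul_succ (n : ℕ) :
    ((n + 1)! : ℚ)⁻¹ * (n + 1 : ℕ) = (n ! : ℚ)⁻¹ := by
  rw [Nat.factorial_succ]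
  push_cast
  field_simp

theorem coeff_polyLift {A : Type*} [Semiring A] {D : A → A} (hD : D 0 = 0)
    (p : Polynomial A) (k : ℕ) : (polyLift D p).coeff k = D (p.coeff k) := by
  rw [polyLift, Polynomial.sum_def, Polynomial.finsetSum_coeff]
  simp_rw [Polynomial.coeff_C_mul_X_pow]
  rw [sum_ite_eq]
  split_ifs with hk
  · rfl
  · rw [Polynomial.notMem_support_iff.mp hk, hD]

def delDerivation : Derivation ℚ RR RR :=
  MvPolynomial.mkDerivation ℚ fun s : Bool × ℕ => MvPolynomial.X (s.1, s.2 + 1)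

theorem del_eq_delDerivation : del = delDerivation := rfl

theorem iterate_del_X_s8 (s : Bool × ℕ) (m : ℕ) :
    del^[m] (MvPolynomial.X s) = MvPolynomial.X (s.1, s.2 + m) := by
  induction m with
  | zero => rfl
  | succ m ih =>
    rw [Function.iterate_succ_apply', ih, del_eq_delDerivation, delDerivation,
      MvPolynomial.mkDerivation_X]
    rfl

theorem iterate_del_va (i m : ℕ) : del^[m] (va i) = va (i + m) := iterate_del_X_s8 _ m

theorem iterate_del_vb (j m : ℕ) : del^[m] (vb j) = vb (j + m) := iterate_del_X_s8 _ m

theorem sigmaMap_va (i : ℕ) : sigmaMap (va i) = va i := by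
  simp [sigmaMap, va]

theorem sigmaMap_vb (j : ℕ) : sigmaMap (vb j) = (j : RR) * vb j := by
  simp [sigmaMap, vb]

theorem rBell_zero (k r : ℕ) : rBell 0 k r = if k = 0 then va 1 ^ r else 0 := by
  rw [rBell, Function.iterate_zero_apply, Polynomial.coeff_C]

theorem rBell_succ_zero_s8 (m r : ℕ) : rBell (m + 1) 0 r = del (rBell m 0 r) := by
  rw [rBell, Function.iterate_succ_apply', EOp, Polynomial.coeff_add, mul_assoc,
    Polynomial.coeff_C_mul, Polynomial.coeff_X_mul_zero, mul_zero, zero_add,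
    coeff_polyLift (D := del) (map_zero delDerivation)]
  rfl

theorem rBell_succ_succ (m k r : ℕ) :
    rBell (m + 1) (k + 1) r = vb 1 * rBell m k r + del (rBell m (k + 1) r) := by
  rw [rBell, Function.iterate_succ_apply', EOp, Polynomial.coeff_add, mul_assoc,
    Polynomial.coeff_C_mul, Polynomial.coeff_X_mul,
    coeff_polyLift (D := del) (map_zero delDerivation)]
  rfl

-- the coefficient of `t^i` in `exp(t b_0)`
def expCoeff (i : ℕ) : RR := (i ! : ℚ)⁻¹ • vb 0 ^ i

theorem del_expCoeff_zero : del (expCoeff 0) = 0 := by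
  simp [expCoeff, del_eq_delDerivation]

theorem del_expCoeff_succ (i : ℕ) : del (expCoeff (i + 1)) = vb 1 * expCoeff i := by
  rw [expCoeff, expCoeff, del_eq_delDerivation, Derivation.map_smul, Derivation.leibniz_pow,
    ← del_eq_delDerivation, ← Function.iterate_one del, iterate_del_vb,
    ← Nat.cast_smul_eq_nsmul ℚ, smul_smul, inv_factorial_succ_mul_succ,
    Nat.add_sub_cancel, zero_add, smul_eq_mul, mul_smul_comm, mul_comm]

theorem sigmaMap_expCoeff_succ (i : ℕ) : sigmaMap (expCoeff (i + 1)) = 0 := by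
  simp [expCoeff, sigmaMap_vb]

theorem del_sum_expCoeff_mul_rBell (m k r : ℕ) :
    del (∑ ij ∈ antidiagonal k, expCoeff ij.1 * rBell m ij.2 r) =
      ∑ ij ∈ antidiagonal k, expCoeff ij.1 * rBell (m + 1) ij.2 r := by
  rw [del_eq_delDerivation, map_sum]
  simp only [Derivation.leibniz, smul_eq_mul]
  rw [← del_eq_delDerivation]
  cases k with
  | zero => simp [del_expCoeff_zero, rBell_succ_zero_s8]
  | succ k =>
    rw [sum_add_distrib,
      Nat.sum_antidiagonal_succ' (f := fun ij => expCoeff ij.1 * del (rBell m ij.2 r)),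
      Nat.sum_antidiagonal_succ (f := fun ij => rBell m ij.2 r * del (expCoeff ij.1)),
      Nat.sum_antidiagonal_succ']
    have hswap (ij : ℕ × ℕ) :
        rBell m ij.2 r * (vb 1 * expCoeff ij.1) = expCoeff ij.1 * (vb 1 * rBell m ij.2 r) := by
      ring
    simp only [del_expCoeff_zero, del_expCoeff_succ, rBell_succ_zero_s8, rBell_succ_succ, mul_zero,
      zero_add, hswap, mul_add, sum_add_distrib]
    abel

theorem sum_expCoeff_mul_rBell (m k r : ℕ) :
    ∑ ij ∈ antidiagonal k, expCoeff ij.1 * rBell m ij.2 r =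
      (k ! : ℚ)⁻¹ • del^[m] (vb 0 ^ k * va 1 ^ r) := by
  induction m generalizing k with
  | zero =>
    rw [Function.iterate_zero_apply, ← smul_mul_assoc, ← expCoeff,
      sum_eq_single_of_mem (k, 0) (by simp)]
    · simp [rBell_zero]
    · rintro ⟨i, j⟩ hij hne
      have hj : j ≠ 0 := by
        rintro rfl
        simp_all
      simp [rBell_zero, hj]
  | succ m ih =>
    rw [← del_sum_expCoeff_mul_rBell, ih, Function.iterate_succ_apply', del_eq_delDerivation,
      Derivation.map_smul]

theorem sigmaMap_rBell (m k r : ℕ) :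
    sigmaMap (rBell m k r) = (k ! : ℚ)⁻¹ • sigmaMap (del^[m] (vb 0 ^ k * va 1 ^ r)) := by
  rw [← map_smul, ← sum_expCoeff_mul_rBell, map_sum, sum_eq_single_of_mem (0, k) (by simp)]
  · simp [expCoeff]
  · rintro ⟨_ | i, j⟩ hij hne
    · simp_all
    · rw [map_mul, sigmaMap_expCoeff_succ, zero_mul]

theorem map_sigmaMap_taylorSeries_vb_zero :
    PowerSeries.map (sigmaMap : RR →+* RR) (delDerivation.taylorSeries (vb 0)) =
      PowerSeries.X * delDerivation.taylorSeries (vb 1) := by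
  refine PowerSeries.ext fun n => ?_
  cases n with
  | zero => simp [sigmaMap_vb]
  | succ n =>
    rw [PowerSeries.coeff_map, PowerSeries.coeff_succ_X_mul, Derivation.coeff_taylorSeries,
      Derivation.coeff_taylorSeries, ← del_eq_delDerivation, iterate_del_vb, iterate_del_vb]
    simp only [RingHom.coe_coe, map_smul, sigmaMap_vb]
    rw [zero_add, ← nsmul_eq_mul, ← Nat.cast_smul_eq_nsmul ℚ, smul_smul,
      inv_factorial_succ_mul_succ, add_comm]

theorem map_sigmaMap_taylorSeries_va (i : ℕ) :
    PowerSeries.map (sigmaMap : RR →+* RR) (delDerivation.taylorSeries (va i)) =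
      delDerivation.taylorSeries (va i) := by
  ext n
  rw [PowerSeries.coeff_map, Derivation.coeff_taylorSeries, ← del_eq_delDerivation,
    iterate_del_va]
  simp only [RingHom.coe_coe, map_smul, sigmaMap_va]

theorem sigmaMap_iterate_del_vb_zero_pow_mul (n k r : ℕ) :
    ((n + k)! : ℚ)⁻¹ • sigmaMap (del^[n + k] (vb 0 ^ k * va 1 ^ r)) =
      (n ! : ℚ)⁻¹ • del^[n] (vb 1 ^ k * va 1 ^ r) := by
  have h : PowerSeries.map (sigmaMap : RR →+* RR)
      (delDerivation.taylorSeries (vb 0 ^ k * va 1 ^ r)) =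
        PowerSeries.X ^ k * delDerivation.taylorSeries (vb 1 ^ k * va 1 ^ r) := by
    simp only [map_mul, map_pow, map_sigmaMap_taylorSeries_vb_zero, map_sigmaMap_taylorSeries_va]
    ring
  have hcoeff := congrArg (PowerSeries.coeff (n + k)) h
  rwa [PowerSeries.coeff_map, PowerSeries.coeff_X_pow_mul, Derivation.coeff_taylorSeries,
    Derivation.coeff_taylorSeries, ← del_eq_delDerivation, RingHom.coe_coe, map_smul] at hcoeff

/-- For all `n, k, r ≥ 0`,
`binom(n+k,n) · ∂^n(a_1^r b_1^k) = σ(B^r_{n+k+r,k+r})`, where `σ : R → R` is the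
`ℚ`-algebra homomorphism with `σ(a_i) = a_i` and `σ(b_j) = j·b_j`. -/
theorem stmt8 (n k r : ℕ) :
    (((n + k).choose n : ℕ) : RR) * del^[n] (va 1 ^ r * vb 1 ^ k) =
      sigmaMap (rBell (n + k) k r) := by
  have hfact : ((n + k)! : ℚ) ≠ 0 := by positivity
  have hchoose : ((n + k).choose n : ℚ) = (k ! : ℚ)⁻¹ * (n + k)! * (n ! : ℚ)⁻¹ := by
    rw [Nat.cast_add_choose]
    field_simp
  rw [sigmaMap_rBell, ← smul_inv_smul₀ hfact (sigmaMap _), sigmaMap_iterate_del_vb_zero_pow_mul,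
    smul_smul, smul_smul, ← hchoose, Nat.cast_smul_eq_nsmul, nsmul_eq_mul, mul_comm (va 1 ^ r)]
end
end
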